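/- Let 𝒵∞ be the maximal state-control invariant set for x⁺ = f(x,u) with joint constraint set 𝒵 = {(x,u) : x ∈ 𝒳, u ∈ 𝒰(x)}, and let 𝒳∞ be the maximal control invariant set. Then for every x ∈ 𝒳∞, the x-section 𝒰_{𝒵∞}(x) = {u : (x,u) ∈ 𝒵∞} equals {u ∈ 𝒰(x) : f(x,u) ∈ 𝒳∞}. -/
import Mathlib

/-- the x-sections of the maximal state-control invariant set are
the admissible invariance-preserving inputs. -/
theorem stmt_3 {X U : Type*} (f : X → U → X) (𝒳 : Set X) (𝒰 : X → Set U)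
    (𝒵 : Set (X × U)) (h𝒵 : 𝒵 = {z : X × U | z.1 ∈ 𝒳 ∧ z.2 ∈ 𝒰 z.1})
    (Zinf : Set (X × U))
    (hZsub : Zinf ⊆ 𝒵)
    (hZinv : ∀ z ∈ Zinf, ∃ u' : U, (f z.1 z.2, u') ∈ Zinf)
    (hZmax : ∀ C ⊆ 𝒵, (∀ z ∈ C, ∃ u' : U, (f z.1 z.2, u') ∈ C) → C ⊆ Zinf)
    (Xinf : Set X)
    (hXsub : Xinf ⊆ 𝒳)
    (hXinv : ∀ x ∈ Xinf, ∃ u ∈ 𝒰 x, f x u ∈ Xinf)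
    (hXmax : ∀ C ⊆ 𝒳, (∀ x ∈ C, ∃ u ∈ 𝒰 x, f x u ∈ C) → C ⊆ Xinf) :
    ∀ x ∈ Xinf, {u : U | (x, u) ∈ Zinf} = {u : U | u ∈ 𝒰 x ∧ f x u ∈ Xinf} := by
  -- projection of Zinf is control invariant, hence ⊆ Xinf
  have hproj : {y : X | ∃ v, (y, v) ∈ Zinf} ⊆ Xinf := by
    apply hXmax
    · rintro y ⟨v, hv⟩
      have := hZsub hv
      rw [h𝒵] at this
      exact this.1
    · rintro y ⟨v, hv⟩
      obtain ⟨u', hu'⟩ := hZinv _ hv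
      have := hZsub hv
      rw [h𝒵] at this
      exact ⟨v, this.2, ⟨u', hu'⟩⟩
  -- the candidate set is state-control invariant, hence ⊆ Zinf
  have hC : {z : X × U | z.1 ∈ Xinf ∧ z.2 ∈ 𝒰 z.1 ∧ f z.1 z.2 ∈ Xinf} ⊆ Zinf := by
    apply hZmax
    · rintro ⟨y, v⟩ ⟨hy, hv, _⟩
      rw [h𝒵]
      exact ⟨hXsub hy, hv⟩
    · rintro ⟨y, v⟩ ⟨hy, hv, hf⟩
      obtain ⟨v', hv', hf'⟩ := hXinv _ hf
      exact ⟨v', hf, hv', hf'⟩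
  intro x hx
  ext u
  constructor
  · intro hu
    have hz := hZsub hu
    rw [h𝒵] at hz
    obtain ⟨u', hu'⟩ := hZinv _ hu
    exact ⟨hz.2, hproj ⟨u', hu'⟩⟩
  · rintro ⟨hu, hf⟩
    exact hC ⟨hx, hu, hf⟩
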